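/- arXiv:2405.05770 — 4 statements merged into one kernel-verified Lean document; each statement's English description precedes it below -/
import Mathlib

section
/- A linear time-invariant single-input single-output system with nonnegative output cannot satisfy hallmark H1 (habituation): there is no periodic stimulus u such that the sequence of per-period peak responses y[k] is nonincreasing and strictly decreasing on some initial segment, starting from the zero trajectory before stimulation. -/
open Set Real

/-- Peak response in period `k` (period length `T`). -/
noncomputable def peak (y : ℝ → ℝ) (T : ℝ) (k : ℕ) : ℝ :=
  sSup (y '' Set.Ico (k * T) ((k + 1) * T))

/-- Hallmark H1: peaks nonincreasing, strictly decreasing on an initial segment. -/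
def HallmarkH1 (y : ℝ → ℝ) (T : ℝ) : Prop :=
  (∀ k : ℕ, peak y T (k + 1) ≤ peak y T k) ∧
  ∃ K : ℕ, 0 < K ∧ ∀ k ≤ K, peak y T (k + 1) < peak y T k

/-- A linear time-invariant system with nonnegative outputs cannot satisfy
hallmark H1 for a periodic stimulus (a train of pulses of period `T`),
with all responses starting from the zero trajectory before stimulation. -/
theorem lti_systems_do_not_habituate
    (B : Set ((ℝ → ℝ) × (ℝ → ℝ)))
    (hlin : ∀ p ∈ B, ∀ q ∈ B, ∀ c₁ c₂ : ℝ,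
      (fun t => c₁ * p.1 t + c₂ * q.1 t, fun t => c₁ * p.2 t + c₂ * q.2 t) ∈ B)
    (hTI : ∀ p ∈ B, ∀ t' : ℝ, (fun t => p.1 (t - t'), fun t => p.2 (t - t')) ∈ B)
    (hnonneg : ∀ p ∈ B, ∀ t : ℝ, 0 ≤ p.2 t)
    (T : ℝ) (hT : 0 < T)
    (pulse : ℝ → ℝ)
    -- a `T`-periodic train of `L` pulses starting at `t = 0`
    (train : ℕ → ℝ → ℝ)
    (htrain : ∀ L t, train L t = ∑ j ∈ Finset.range L, pulse (t - j * T))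
    -- every response to such a train starts from the zero trajectory before
    -- stimulation and is bounded
    (hzero : ∀ L y, (train L, y) ∈ B → ∀ t < (0 : ℝ), y t = 0)
    (hbdd : ∀ L y, (train L, y) ∈ B → ∃ M : ℝ, ∀ t, y t ≤ M)
    -- the system habituates: every response to a pulse train satisfies H1
    (hH1 : ∀ L y, (train L, y) ∈ B → HallmarkH1 y T)
    -- some response to a nontrivial pulse train exists
    (hex : ∃ L y, 1 ≤ L ∧ (train L, y) ∈ B) :
    False := by
  obtain ⟨L, y, hL, hy⟩ := hex
  set w : ℝ → ℝ := fun t => y t + y (t - L * T) with hw_def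
  -- w is the response to a train of 2L pulses
  have hw : (train (L + L), w) ∈ B := by
    have h := hlin _ hy _ (hTI _ hy (L * T)) 1 1
    have hpair : ((fun t => 1 * (train L, y).1 t +
          1 * (fun t => (train L, y).1 (t - L * T), fun t => (train L, y).2 (t - L * T)).1 t),
        (fun t => 1 * (train L, y).2 t +
          1 * (fun t => (train L, y).1 (t - L * T), fun t => (train L, y).2 (t - L * T)).2 t))
        = (train (L + L), w) := by
      refine Prod.ext ?_ ?_
      · funext t
        simp only [htrain, one_mul]
        rw [Finset.sum_range_add]
        congr 1
        apply Finset.sum_congr rfl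
        intro j _
        congr 1
        push_cast
        ring
      · funext t
        simp [hw_def]
    rw [hpair] at h
    exact h
  -- basic facts
  have hy_nonneg : ∀ t, 0 ≤ y t := hnonneg _ hy
  obtain ⟨My, hMy⟩ := hbdd _ _ hy
  obtain ⟨Mw, hMw⟩ := hbdd _ _ hw
  have hIcoNe : ∀ k : ℕ, (Set.Ico ((k : ℝ) * T) (((k : ℝ) + 1) * T)).Nonempty := by
    intro k
    refine ⟨(k : ℝ) * T, le_refl _, ?_⟩
    nlinarith
  have hbddw : ∀ k : ℕ, BddAbove (w '' Set.Ico ((k : ℝ) * T) (((k : ℝ) + 1) * T)) := by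
    intro k
    refine ⟨Mw, ?_⟩
    rintro x ⟨t, _, rfl⟩
    exact hMw t
  -- H1 for w
  obtain ⟨hmono, K, hK, hstrict⟩ := hH1 _ _ hw
  have hanti : ∀ m n : ℕ, m ≤ n → peak w T n ≤ peak w T m := by
    intro m n hmn
    exact antitone_nat_of_succ_le hmono hmn
  have h10 : peak w T 1 < peak w T 0 := hstrict 0 (Nat.zero_le K)
  -- peak w 0 = peak y 0, since y (t - L*T) = 0 on [0, T)
  have hLT : T ≤ (L : ℝ) * T := by
    have : (1 : ℝ) ≤ (L : ℝ) := by exact_mod_cast hL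
    nlinarith
  have hq0 : peak w T 0 = peak y T 0 := by
    unfold peak
    congr 1
    apply Set.image_congr
    intro t ht
    simp only [Nat.cast_zero, zero_mul, zero_add, one_mul] at ht
    have hz : y (t - L * T) = 0 := by
      apply hzero L y hy
      have := ht.2
      linarith
    simp [hw_def, hz]
  -- peak y 0 ≤ peak w L
  have hp0qL : peak y T 0 ≤ peak w T L := by
    unfold peak
    apply csSup_le
    · apply Set.Nonempty.image
      have := hIcoNe 0
      simpa using this
    · rintro x ⟨s, hs, rfl⟩
      simp only [Nat.cast_zero, zero_mul, zero_add, one_mul] at hs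
      have hmem : s + (L : ℝ) * T ∈ Set.Ico ((L : ℝ) * T) (((L : ℝ) + 1) * T) := by
        constructor
        · linarith [hs.1]
        · have := hs.2; nlinarith
      have h1 : y s ≤ w (s + (L : ℝ) * T) := by
        simp only [hw_def]
        have : s + (L : ℝ) * T - (L : ℝ) * T = s := by ring
        rw [this]
        have := hy_nonneg (s + (L : ℝ) * T)
        linarith
      have h2 : w (s + (L : ℝ) * T) ≤ sSup (w '' Set.Ico ((L : ℝ) * T) (((L : ℝ) + 1) * T)) :=
        le_csSup (hbddw L) ⟨s + (L : ℝ) * T, hmem, rfl⟩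
      exact le_trans h1 h2
  have hqL1 : peak w T L ≤ peak w T 1 := hanti 1 L hL
  linarith [hq0 ▸ (lt_of_le_of_lt (le_trans hp0qL hqL1) h10)]
end

section
/- For the system T·x' + x = u with x(0)=0 and output y = a·ReLU(cu − x + b), if the stimulus is withheld (u ≡ 0) after k stimulation periods leaving state x(kT₀) = x_k > 0, then x(t) = x_k·e^{−(t−kT₀)/T} decays to 0, and for any ε > 0 there exists m ∈ ℕ such that after withholding for m periods the response to a renewed stimulus of amplitude A satisfies y[k+m+1] ≥ a·ReLU(cA + b) − ε; in particular if cA + b > 0 and y[k] < a(cA + b) then there exists m with y[k+m+1] > y[k]. -/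
/-!
After time `kT₀` the memory obeys `x' = -x/T`, so `x(t) e^{(t - kT₀)/T}` has zero derivative and
`x` is the decaying exponential `x_k e^{-(t - kT₀)/T}`. The sampling times `(k + m + 1)T₀` tend to
infinity, so the memory seen by the renewed stimulus tends to `0`, and by continuity of
`u ↦ a·ReLU(cA - u + b)` the response tends to the rested value `a·ReLU(cA + b)`.
-/

open Real Filter Set Topology

theorem eq_mul_exp_of_hasDerivAt_mul {f : ℝ → ℝ} {μ s : ℝ} (hf : ContinuousOn f (Ici s))
    (hderiv : ∀ t, s < t → HasDerivAt f (μ * f t) t) :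
    ∀ t, s ≤ t → f t = f s * exp (μ * (t - s)) := by
  set g : ℝ → ℝ := fun u => f u * exp (-μ * (u - s))
  have hg_deriv : ∀ t, s < t → HasDerivAt g 0 t := by
    intro t ht
    have hexp : HasDerivAt (fun u => exp (-μ * (u - s))) (exp (-μ * (t - s)) * (-μ)) t := by
      simpa using ((hasDerivAt_id t).sub_const s).const_mul (-μ) |>.exp
    have hprod := (hderiv t ht).mul hexp
    rwa [show μ * f t * exp (-μ * (t - s)) + f t * (exp (-μ * (t - s)) * -μ) = 0 by ring]
      at hprod
  have hg_cont : ContinuousOn g (Ici s) := hf.mul (by fun_prop)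
  intro t ht
  rcases ht.eq_or_lt with rfl | ht
  · simp
  obtain ⟨_, -, hslope⟩ := exists_hasDerivAt_eq_slope g 0 ht (hg_cont.mono Icc_subset_Ici_self)
    fun u hu => hg_deriv u hu.1
  have hgt : g t = g s := by
    rw [Pi.zero_apply, eq_comm, div_eq_zero_iff] at hslope
    exact sub_eq_zero.1 (hslope.resolve_right (sub_ne_zero.2 ht.ne'))
  simp only [g, sub_self, mul_zero, exp_zero, mul_one] at hgt
  rw [← hgt, mul_assoc, ← exp_add, neg_mul, neg_add_cancel, exp_zero, mul_one]

theorem tendsto_mul_exp_mul_sub_atTop {μ : ℝ} (hμ : μ < 0) (C s : ℝ) :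
    Tendsto (fun t => C * exp (μ * (t - s))) atTop (𝓝 0) := by
  have hexponent : Tendsto (fun t => μ * (t - s)) atTop atBot :=
    (tendsto_atTop_add_const_right _ (-s) tendsto_id).const_mul_atTop_of_neg hμ
  simpa using (tendsto_exp_atBot.comp hexponent).const_mul C

theorem spontaneous_recovery_general
    (a c b A T T₀ : ℝ)
    (hT : 0 < T) (hT₀ : 0 < T₀)
    (k : ℕ) (xk : ℝ)
    (x : ℝ → ℝ)
    (hinit : x ((k : ℝ) * T₀) = xk)
    (hcont : ContinuousOn x (Ici ((k : ℝ) * T₀)))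
    -- stimulus withheld: `T x' + x = 0` after time `kT₀`
    (hode : ∀ t, (k : ℝ) * T₀ < t → HasDerivAt x (-(x t) / T) t)
    -- peak response to a renewed stimulus after withholding for `m` periods
    (resp : ℕ → ℝ)
    (hresp : ∀ m : ℕ, resp m = a * max 0 (c * A - x (((k : ℝ) + (m : ℝ) + 1) * T₀) + b))
    (yk : ℝ) :
    (∀ t, (k : ℝ) * T₀ ≤ t → x t = xk * exp (-(t - (k : ℝ) * T₀) / T)) ∧
    Tendsto x atTop (nhds 0) ∧
    (∀ ε : ℝ, 0 < ε → ∃ m : ℕ, a * max 0 (c * A + b) - ε ≤ resp m) ∧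
    (0 < c * A + b → yk < a * (c * A + b) → ∃ m : ℕ, yk < resp m) := by
  have hsol : ∀ t, (k : ℝ) * T₀ ≤ t → x t = xk * exp (-T⁻¹ * (t - k * T₀)) := by
    rw [← hinit]
    exact eq_mul_exp_of_hasDerivAt_mul hcont fun t ht => by
      convert hode t ht using 1
      ring
  have hx : Tendsto x atTop (𝓝 0) :=
    (tendsto_mul_exp_mul_sub_atTop (neg_neg_of_pos (inv_pos.2 hT)) xk _).congr'
      (eventually_ge_atTop _ |>.mono fun t ht => (hsol t ht).symm)
  have htimes : Tendsto (fun m : ℕ => ((k : ℝ) + m + 1) * T₀) atTop atTop :=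
    (tendsto_atTop_add_const_right _ 1
      (tendsto_atTop_add_const_left _ _ tendsto_natCast_atTop_atTop)).atTop_mul_const hT₀
  have hresp_lim : Tendsto resp atTop (𝓝 (a * max 0 (c * A + b))) := by
    have hcontResp : Continuous fun u => a * max 0 (c * A - u + b) := by fun_prop
    simpa [funext hresp, Function.comp_def] using (hcontResp.tendsto 0).comp (hx.comp htimes)
  refine ⟨fun t ht => ?_, hx, fun ε hε => ?_, fun hpos hyk => ?_⟩
  · rw [hsol t ht]
    ring_nf
  · exact ((hresp_lim.eventually_const_lt (sub_lt_self _ hε)).exists).imp fun _ => le_of_lt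
  · rw [max_eq_right hpos.le] at hresp_lim
    exact (hresp_lim.eventually_const_lt hyk).exists

/-- Hallmark H2 (spontaneous recovery): withholding the stimulus after `k`
periods, the memory decays as `x(t) = x_k e^{−(t−kT₀)/T} → 0`, so the response
to a renewed stimulus approaches the rested response `a·ReLU(cA + b)`; in
particular, it eventually exceeds the habituated response `y[k]`. -/
theorem spontaneous_recovery
    (a c b A T T₀ : ℝ) (ha : 0 < a) (hc : 0 < c) (hA : 0 < A)
    (hT : 0 < T) (hT₀ : 0 < T₀)
    (k : ℕ) (xk : ℝ) (hxk : 0 < xk)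
    (x : ℝ → ℝ)
    (hinit : x ((k : ℝ) * T₀) = xk)
    (hcont : ContinuousOn x (Ici ((k : ℝ) * T₀)))
    -- stimulus withheld: `T x' + x = 0` after time `kT₀`
    (hode : ∀ t, (k : ℝ) * T₀ < t → HasDerivAt x (-(x t) / T) t)
    -- peak response to a renewed stimulus after withholding for `m` periods
    (resp : ℕ → ℝ)
    (hresp : ∀ m : ℕ, resp m = a * max 0 (c * A - x (((k : ℝ) + (m : ℝ) + 1) * T₀) + b))
    (yk : ℝ) :
    (∀ t, (k : ℝ) * T₀ ≤ t → x t = xk * exp (-(t - (k : ℝ) * T₀) / T)) ∧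
    Tendsto x atTop (nhds 0) ∧
    (∀ ε : ℝ, 0 < ε → ∃ m : ℕ, a * max 0 (c * A + b) - ε ≤ resp m) ∧
    (0 < c * A + b → yk < a * (c * A + b) → ∃ m : ℕ, yk < resp m) :=
  spontaneous_recovery_general a c b A T T₀ hT hT₀ k xk x hinit hcont hode resp hresp yk
end

section
/- In the piecewise-linear circuit model with output y = a·ReLU(cu − x + b), suppose after repeated stimulation the asymptotic response level y = 0 is reached at period k (i.e., c·A − x[k] + b ≤ 0). If stimulation continues, the memory x[k+l] continues to strictly increase with l while the output remains 0, and the recovery time τ(x₀) := inf{ t ≥ 0 : cA − x₀e^{−t/T} + b ≥ θ } (time until the response to a renewed stimulus again exceeds threshold θ ∈ (0, cA + b)) is strictly increasing in x₀. Consequently, for l₁ < l₂, a system receiving k + l₂ stimulations takes strictly longer to recover than one receiving k + l₁ stimulations. -/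
open Real Set

/-- Hallmark H6 (subliminal accumulation): once the asymptotic response level
`y = 0` is reached at period `k`, continued stimulation keeps the output at `0`
while the memory `x[k+l]` keeps strictly increasing; the recovery time
`τ(x₀) = inf{t ≥ 0 : cA − x₀e^{−t/T} + b ≥ θ}` is strictly increasing in `x₀`,
so more stimulations (`l₂ > l₁`) imply a strictly longer recovery. -/
theorem subliminal_accumulation
    (a c b A T θ : ℝ) (ha : 0 < a) (hc : 0 < c) (hA : 0 < A) (hT : 0 < T)
    (hθ : θ ∈ Set.Ioo 0 (c * A + b))
    (x : ℕ → ℝ) (hx : StrictMono x)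
    (k : ℕ) (hk : c * A - x k + b ≤ 0)
    (τ : ℝ → ℝ)
    (hτ : ∀ x₀ : ℝ, τ x₀ = sInf {t : ℝ | 0 ≤ t ∧ θ ≤ c * A - x₀ * exp (-t / T) + b}) :
    (∀ l : ℕ, x (k + l) < x (k + l + 1) ∧ a * max 0 (c * A - x (k + l) + b) = 0) ∧
    StrictMonoOn τ (Set.Ici (c * A + b)) ∧
    (∀ l₁ l₂ : ℕ, l₁ < l₂ → τ (x (k + l₁)) < τ (x (k + l₂))) := by
  obtain ⟨hθ0, hθM⟩ := hθ
  set M := c * A + b with hM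
  have hD : 0 < M - θ := by linarith
  -- closed form for τ on Ici M
  have hform : ∀ x₀ ∈ Set.Ici M, τ x₀ = T * Real.log (x₀ / (M - θ)) := by
    intro x₀ hx₀
    have hx₀pos : 0 < x₀ := lt_of_lt_of_le (by linarith) hx₀
    have hx₀' : M ≤ x₀ := hx₀
    have hxD : 1 < x₀ / (M - θ) := (one_lt_div hD).2 (by linarith)
    have hlogpos : 0 < Real.log (x₀ / (M - θ)) := Real.log_pos hxD
    have hset : {t : ℝ | 0 ≤ t ∧ θ ≤ c * A - x₀ * exp (-t / T) + b}
        = Set.Ici (T * Real.log (x₀ / (M - θ))) := by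
      ext t
      simp only [Set.mem_setOf_eq, Set.mem_Ici]
      constructor
      · rintro ⟨ht0, ht⟩
        have h1 : x₀ * exp (-t / T) ≤ M - θ := by
          simp only [hM]; nlinarith [ht]
        have h2 : exp (-t / T) ≤ (M - θ) / x₀ := by
          rw [le_div_iff₀ hx₀pos]; linarith [h1]
        have h3 : -t / T ≤ Real.log ((M - θ) / x₀) := by
          have := Real.log_le_log (Real.exp_pos _) h2
          rwa [Real.log_exp] at this
        rw [Real.log_div (by linarith) (ne_of_gt hx₀pos)] at h3
        have h4 : Real.log (x₀ / (M - θ)) = Real.log x₀ - Real.log (M - θ) :=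
          Real.log_div (ne_of_gt hx₀pos) (by linarith)
        rw [h4]
        rw [div_le_iff₀ hT] at h3
        nlinarith [h3]
      · intro ht
        have ht0 : 0 ≤ t := le_trans (le_of_lt (by positivity)) ht
        refine ⟨ht0, ?_⟩
        have h3 : Real.log (x₀ / (M - θ)) ≤ t / T := by
          rw [le_div_iff₀ hT]; linarith [ht]
        have h4 : -t / T ≤ Real.log ((M - θ) / x₀) := by
          rw [Real.log_div (by linarith) (ne_of_gt hx₀pos)]
          rw [Real.log_div (ne_of_gt hx₀pos) (by linarith)] at h3
          have : -(t / T) ≤ -(Real.log x₀ - Real.log (M - θ)) := by linarith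
          rw [neg_div]; linarith
        have h5 : exp (-t / T) ≤ (M - θ) / x₀ := by
          calc exp (-t / T) ≤ exp (Real.log ((M - θ) / x₀)) := Real.exp_le_exp.2 h4
            _ = (M - θ) / x₀ := Real.exp_log (by positivity)
        have : x₀ * exp (-t / T) ≤ M - θ := by
          rw [le_div_iff₀ hx₀pos] at h5; linarith [h5]
        simp only [hM] at this ⊢; linarith
    rw [hτ, hset, csInf_Ici]
  have hxkM : M ≤ x k := by linarith
  have hxklM : ∀ l : ℕ, M ≤ x (k + l) := fun l =>
    le_trans hxkM (hx.monotone (Nat.le_add_right k l))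
  have hmono : StrictMonoOn τ (Set.Ici M) := by
    intro p hp q hq hpq
    rw [hform p hp, hform q hq]
    have hppos : 0 < p := lt_of_lt_of_le (by linarith) hp
    have hdiv : p / (M - θ) < q / (M - θ) := by gcongr
    exact mul_lt_mul_of_pos_left (Real.log_lt_log (by positivity) hdiv) hT
  refine ⟨?_, hmono, ?_⟩
  · intro l
    refine ⟨hx (by omega), ?_⟩
    have : c * A - x (k + l) + b ≤ 0 := by have := hxklM l; linarith
    rw [max_eq_left this, mul_zero]
  · intro l₁ l₂ hl
    exact hmono (hxklM l₁) (hxklM l₂) (hx (by omega))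
end

section
/- The differential-algebraic diode output equation has a unique solution: for any real constants R₂ > 0, I_S > 0, n > 0, U_T > 0 and any real v (the driving voltage c·u − x), there exists a unique pair (I_D, U_D) ∈ ℝ² satisfying I_D = I_S(e^{U_D/(nU_T)} − 1) and U_D = v − R₂·I_D; moreover I_D is a strictly increasing continuous function of v, with I_D > −I_S always and I_D > 0 iff v > 0. -/
open Real

/-- The differential-algebraic diode output relation has a unique solution:
for every driving voltage `v` there is a unique pair `(I_D, U_D)` with
`I_D = I_S(e^{U_D/(nU_T)} − 1)` and `U_D = v − R₂ I_D`; moreover `I_D` depends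
continuously and strictly monotonically on `v`, always satisfies
`I_D > −I_S`, and `I_D > 0 ↔ v > 0`. -/
theorem diode_output_unique_and_monotone
    (R₂ IS n UT : ℝ) (hR₂ : 0 < R₂) (hIS : 0 < IS) (hn : 0 < n) (hUT : 0 < UT) :
    (∀ v : ℝ, ∃! p : ℝ × ℝ,
      p.1 = IS * (exp (p.2 / (n * UT)) - 1) ∧ p.2 = v - R₂ * p.1) ∧
    ∃ g : ℝ → ℝ, Continuous g ∧ StrictMono g ∧
      (∀ v : ℝ, g v = IS * (exp ((v - R₂ * g v) / (n * UT)) - 1)) ∧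
      (∀ v : ℝ, -IS < g v) ∧
      (∀ v : ℝ, 0 < g v ↔ 0 < v) := by
  set c : ℝ := n * UT with hc
  have hcpos : 0 < c := mul_pos hn hUT
  have hRI : 0 < R₂ * IS := mul_pos hR₂ hIS
  set F : ℝ → ℝ := fun U => U + R₂ * IS * (exp (U / c) - 1) with hFdef
  have hmono : StrictMono F := by
    intro a b hab
    have h1 : exp (a / c) ≤ exp (b / c) :=
      exp_le_exp.mpr (div_le_div_of_nonneg_right hab.le hcpos.le)
    simp only [hFdef]
    nlinarith
  have hFcont : Continuous F := by
    apply continuous_id.add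
    exact continuous_const.mul ((continuous_exp.comp (continuous_id.div_const c)).sub
      continuous_const)
  have hsurj : Function.Surjective F := by
    intro v
    have hle1 : F (min v 0) ≤ v := by
      rcases le_total v 0 with h | h
      · have h1 : exp (v / c) ≤ 1 := by
          rw [exp_le_one_iff]
          exact div_nonpos_of_nonpos_of_nonneg h hcpos.le
        simp only [hFdef, min_eq_left h]
        nlinarith
      · simp only [hFdef, min_eq_right h]
        simpa using h
    have hle2 : v ≤ F (v + R₂ * IS) := by
      have h1 : 0 < exp ((v + R₂ * IS) / c) := exp_pos _
      simp only [hFdef]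
      nlinarith
    have hab : min v 0 ≤ v + R₂ * IS := le_trans (min_le_left _ _) (by linarith)
    obtain ⟨U, _, hU⟩ := intermediate_value_Icc hab hFcont.continuousOn ⟨hle1, hle2⟩
    exact ⟨U, hU⟩
  set e : ℝ ≃o ℝ := StrictMono.orderIsoOfSurjective F hmono hsurj with he
  have hecoe : ∀ x, e x = F x := fun x => rfl
  have hFe : ∀ v, F (e.symm v) = v := by
    intro v
    rw [← hecoe]
    exact e.apply_symm_apply v
  set g : ℝ → ℝ := fun v => IS * (exp (e.symm v / c) - 1) with hgdef
  have hUg : ∀ v, e.symm v = v - R₂ * g v := by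
    intro v
    have := hFe v
    simp only [hFdef] at this
    simp only [hgdef]
    ring_nf
    ring_nf at this
    linarith
  have he0 : e.symm 0 = 0 := by
    have : e 0 = 0 := by simp [hecoe, hFdef]
    rw [← this, e.symm_apply_apply]
    exact this.symm
  constructor
  · intro v
    refine ⟨(g v, e.symm v), ⟨rfl, (hUg v).symm ▸ ?_⟩, ?_⟩
    · rw [← hUg v]
    · rintro ⟨I, U⟩ ⟨h1, h2⟩
      simp only at h1 h2
      have hFU : F U = v := by
        have h3 : R₂ * IS * (exp (U / c) - 1) = R₂ * I := by rw [h1]; ring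
        simp only [hFdef]
        linarith
      have hU : U = e.symm v := by
        rw [← hFU, ← hecoe, e.symm_apply_apply]
      have hI : I = g v := by rw [h1, hU]
      exact Prod.ext hI hU
  · refine ⟨g, ?_, ?_, ?_, ?_, ?_⟩
    · exact continuous_const.mul ((continuous_exp.comp
        (e.symm.continuous.div_const c)).sub continuous_const)
    · intro a b hab
      have h1 : e.symm a < e.symm b := e.symm.strictMono hab
      have h2 : exp (e.symm a / c) < exp (e.symm b / c) :=
        exp_lt_exp.mpr ((div_lt_div_iff_of_pos_right hcpos).mpr h1)
      simp only [hgdef]; nlinarith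
    · intro v
      rw [← hUg v]
    · intro v
      have := exp_pos (e.symm v / c)
      simp only [hgdef]
      nlinarith
    · intro v
      have h1 : (0 < g v) ↔ 0 < e.symm v := by
        simp only [hgdef]
        constructor
        · intro h
          have h2 : 1 < exp (e.symm v / c) := by nlinarith
          have h3 : 0 < e.symm v / c := by
            by_contra hcon
            push_neg at hcon
            have := exp_le_one_iff.mpr hcon
            linarith
          exact (div_pos_iff.mp h3).resolve_right (fun hbad => absurd hcpos (not_lt.mpr hbad.2.le)) |>.1
        · intro h
          have h3 : 0 < e.symm v / c := div_pos h hcpos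
          have h2 : 1 < exp (e.symm v / c) := by
            rw [← exp_zero]; exact exp_lt_exp.mpr h3
          nlinarith
      rw [h1]
      conv_lhs => rw [← he0]
      exact e.symm.lt_iff_lt
end
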